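/- Let (A,C,ψ) be an entwining structure over k, and let Ω^•A be the universal differential graded algebra of A with Ω^n A = Ã ⊗ A^{⊗n} for n > 0 (Ã = A ⊕ k the unitalization) and Ω⁰A = A. Define ψ̂: C ⊗ Ω A → Ω A ⊗ C by ψ̂(c ⊗ (a₀+μ)da₁...da_n) = (a_{0ψ} da_{1ψ}...da_{nψ}) ⊗ c^{ψ^{n+1}} + μ (da_{1ψ}...da_{nψ}) ⊗ c^{ψ^n}. Then ψ̂ is multiplicative: for all c ∈ C and a, a' ∈ A, ψ̂(c ⊗ ((da)·a')) = ((da_ψ)·a'_ψ) ⊗ c^{ψψ}, where (da)·a' = d(aa') − a(da'). -/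

import Mathlib

/-!
In the model `Ω¹A = Ã ⊗ A` we have `(da)·a' = 1 ⊗ aa' − ã ⊗ a'`. Since `ψ̃` fixes the unit of `Ã`,
`ψ̂` acts on the first term by entwining `c` past `aa'` alone, and the multiplicativity axiom of
`ψ` rewrites this as entwining past `a` and then past `a'`. Since `ψ̃` restricts to `ψ` on `A`,
`ψ̂` acts on the second term as the double entwining `psiTwo`.
-/

open TensorProduct

/-- An entwining structure `(A, C, ψ)` over a field `k`: a unital `k`-algebra `A`,
a counital `k`-coalgebra `C` and a `k`-linear map `ψ : C ⊗ A → A ⊗ C` satisfying the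
entwining axioms of Brzeziński–Majid. -/
structure Entwining (k A C : Type) [Field k] [Ring A] [Algebra k A]
    [AddCommGroup C] [Module k C] [Coalgebra k C] : Type where
  ψ : C ⊗[k] A →ₗ[k] A ⊗[k] C
  mul_compat : ψ ∘ₗ TensorProduct.map (LinearMap.id : C →ₗ[k] C) (LinearMap.mul' k A) =
    TensorProduct.map (LinearMap.mul' k A) (LinearMap.id : C →ₗ[k] C)
      ∘ₗ (TensorProduct.assoc k A A C).symm.toLinearMap
      ∘ₗ TensorProduct.map (LinearMap.id : A →ₗ[k] A) ψ
      ∘ₗ (TensorProduct.assoc k A C A).toLinearMap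
      ∘ₗ TensorProduct.map ψ (LinearMap.id : A →ₗ[k] A)
      ∘ₗ (TensorProduct.assoc k C A A).symm.toLinearMap
  comul_compat : TensorProduct.map (LinearMap.id : A →ₗ[k] A)
        (CoalgebraStruct.comul (R := k) (A := C)) ∘ₗ ψ =
    (TensorProduct.assoc k A C C).toLinearMap
      ∘ₗ TensorProduct.map ψ (LinearMap.id : C →ₗ[k] C)
      ∘ₗ (TensorProduct.assoc k C A C).symm.toLinearMap
      ∘ₗ TensorProduct.map (LinearMap.id : C →ₗ[k] C) ψ
      ∘ₗ (TensorProduct.assoc k C C A).toLinearMap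
      ∘ₗ TensorProduct.map (CoalgebraStruct.comul (R := k) (A := C)) (LinearMap.id : A →ₗ[k] A)
  counit_compat : (TensorProduct.rid k A).toLinearMap
      ∘ₗ TensorProduct.map (LinearMap.id : A →ₗ[k] A)
        (CoalgebraStruct.counit (R := k) (A := C)) ∘ₗ ψ =
    (TensorProduct.lid k A).toLinearMap
      ∘ₗ TensorProduct.map (CoalgebraStruct.counit (R := k) (A := C)) (LinearMap.id : A →ₗ[k] A)
  unit_compat : ∀ c : C, ψ (c ⊗ₜ[k] (1 : A)) = (1 : A) ⊗ₜ[k] c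

variable {k A C : Type}

section UniversalDGA

variable (k A C)
variable [Field k] [Ring A] [Algebra k A] [AddCommGroup C] [Module k C] [Coalgebra k C]

/-- `Ω¹A = Ã ⊗ A`, the space of 1-forms `(a₀ + μ) da₁` of the universal differential
graded algebra of `A`, where `Ã = A ⊕ k` is the unitalization. -/
abbrev OmegaOne : Type := Unitization k A ⊗[k] A

variable {k A C} (e : Entwining k A C)

/-- The extension `ψ̃ : C ⊗ Ã → Ã ⊗ C` of the entwining `ψ` to the unitalization,
`ψ̃(c ⊗ (a₀ + μ)) = ψ(c ⊗ a₀) + μ (1 ⊗ c)`. -/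
noncomputable def psiTilde :
    C ⊗[k] Unitization k A →ₗ[k] Unitization k A ⊗[k] C :=
  TensorProduct.map (Unitization.inrHom k k A) (LinearMap.id : C →ₗ[k] C) ∘ₗ e.ψ ∘ₗ
      TensorProduct.map (LinearMap.id : C →ₗ[k] C) (Unitization.sndHom k k A)
    + TensorProduct.map ((Algebra.linearMap k (Unitization k A)) ∘ₗ
        (Unitization.fstHom k A).toLinearMap) (LinearMap.id : C →ₗ[k] C) ∘ₗ
      (TensorProduct.comm k C (Unitization k A)).toLinearMap

/-- The entwining `ψ̂ : C ⊗ Ω¹A → Ω¹A ⊗ C` on 1-forms, given by entwining `c` first past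
the `Ã`-factor and then past the `A`-factor; on `(a₀ + μ)da₁` it is
`ψ̂(c ⊗ (a₀+μ)da₁) = a₀ψ da₁ψ ⊗ c^{ψψ} + μ da₁ψ ⊗ c^ψ`. -/
noncomputable def psiHatOne :
    C ⊗[k] OmegaOne k A →ₗ[k] OmegaOne k A ⊗[k] C :=
  (TensorProduct.assoc k (Unitization k A) A C).symm.toLinearMap
    ∘ₗ TensorProduct.map (LinearMap.id : Unitization k A →ₗ[k] Unitization k A) e.ψ
    ∘ₗ (TensorProduct.assoc k (Unitization k A) C A).toLinearMap
    ∘ₗ TensorProduct.map (psiTilde e) (LinearMap.id : A →ₗ[k] A)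
    ∘ₗ (TensorProduct.assoc k C (Unitization k A) A).symm.toLinearMap

/-- The double entwining `C ⊗ (A ⊗ A) → (A ⊗ A) ⊗ C`,
`c ⊗ a ⊗ a' ↦ (a_ψ ⊗ a'_ψ) ⊗ c^{ψψ}`. -/
noncomputable def psiTwo :
    C ⊗[k] (A ⊗[k] A) →ₗ[k] (A ⊗[k] A) ⊗[k] C :=
  (TensorProduct.assoc k A A C).symm.toLinearMap
    ∘ₗ TensorProduct.map (LinearMap.id : A →ₗ[k] A) e.ψ
    ∘ₗ (TensorProduct.assoc k A C A).toLinearMap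
    ∘ₗ TensorProduct.map e.ψ (LinearMap.id : A →ₗ[k] A)
    ∘ₗ (TensorProduct.assoc k C A A).symm.toLinearMap

variable (k A) in
/-- The bilinear operation `(a, a') ↦ (da)·a' = d(aa') − a (da')` of `Ω¹A`, i.e.
`(a, a') ↦ 1 ⊗ (aa') − ã ⊗ a'` in the model `Ω¹A = Ã ⊗ A`. -/
noncomputable def dMulRight : A ⊗[k] A →ₗ[k] OmegaOne k A :=
  (TensorProduct.mk k (Unitization k A) A (1 : Unitization k A)) ∘ₗ LinearMap.mul' k A
    - TensorProduct.map (Unitization.inrHom k k A) (LinearMap.id : A →ₗ[k] A)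

theorem Entwining.psi_tmul_mul (c : C) (a a' : A) :
    e.ψ (c ⊗ₜ[k] (a * a')) =
      map (LinearMap.mul' k A) LinearMap.id (psiTwo e (c ⊗ₜ[k] (a ⊗ₜ[k] a'))) := by
  simpa [psiTwo] using LinearMap.congr_fun e.mul_compat (c ⊗ₜ[k] (a ⊗ₜ[k] a'))

theorem psiTilde_tmul_one (c : C) : psiTilde e (c ⊗ₜ[k] 1) = 1 ⊗ₜ[k] c := by
  simp [psiTilde]

theorem psiTilde_tmul_inr (c : C) (a : A) :
    psiTilde e (c ⊗ₜ[k] (a : Unitization k A)) =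
      map (Unitization.inrHom k k A) LinearMap.id (e.ψ (c ⊗ₜ[k] a)) := by
  simp [psiTilde]

theorem psiHatOne_tmul_one_tmul (c : C) (a : A) :
    psiHatOne e (c ⊗ₜ[k] ((1 : Unitization k A) ⊗ₜ[k] a)) =
      map (mk k (Unitization k A) A 1) LinearMap.id
        (e.ψ (c ⊗ₜ[k] a)) := by
  simp only [psiHatOne, LinearMap.coe_comp, Function.comp_apply, LinearEquiv.coe_coe,
    assoc_symm_tmul, map_tmul, psiTilde_tmul_one,
    assoc_tmul, LinearMap.id_coe, id_eq]
  induction e.ψ (c ⊗ₜ[k] a) using TensorProduct.induction_on with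
  | zero => simp
  | tmul a₁ c₁ => simp
  | add x y hx hy => simp only [tmul_add, map_add, hx, hy]

theorem psiHatOne_tmul_inr_tmul (c : C) (a a' : A) :
    psiHatOne e (c ⊗ₜ[k] ((a : Unitization k A) ⊗ₜ[k] a')) =
      map (map (Unitization.inrHom k k A) LinearMap.id) LinearMap.id
        (psiTwo e (c ⊗ₜ[k] (a ⊗ₜ[k] a'))) := by
  simp only [psiHatOne, psiTwo, LinearMap.coe_comp, Function.comp_apply, LinearEquiv.coe_coe,
    assoc_symm_tmul, map_tmul, psiTilde_tmul_inr, LinearMap.id_coe,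
    id_eq]
  induction e.ψ (c ⊗ₜ[k] a) using TensorProduct.induction_on with
  | zero => simp
  | tmul a₁ c₁ =>
    simp only [map_tmul, assoc_tmul, LinearMap.id_coe, id_eq]
    induction e.ψ (c₁ ⊗ₜ[k] a') using TensorProduct.induction_on with
    | zero => simp
    | tmul a₂ c₂ => simp
    | add x y hx hy => simp only [tmul_add, map_add, hx, hy]
  | add x y hx hy => simp only [add_tmul, map_add, hx, hy]

theorem psiHat_multiplicative (c : C) (a a' : A) :
    psiHatOne e (c ⊗ₜ[k] dMulRight k A (a ⊗ₜ[k] a')) =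
      TensorProduct.map (dMulRight k A) (LinearMap.id : C →ₗ[k] C)
        (psiTwo e (c ⊗ₜ[k] (a ⊗ₜ[k] a'))) := by
  have hsplit : psiHatOne e (c ⊗ₜ[k] dMulRight k A (a ⊗ₜ[k] a')) =
      psiHatOne e (c ⊗ₜ[k] ((1 : Unitization k A) ⊗ₜ[k] (a * a')))
        - psiHatOne e (c ⊗ₜ[k] ((a : Unitization k A) ⊗ₜ[k] a')) := by
    simp [dMulRight, tmul_sub]
  rw [hsplit, psiHatOne_tmul_one_tmul, e.psi_tmul_mul, psiHatOne_tmul_inr_tmul,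
    ← LinearMap.comp_apply, ← map_comp, LinearMap.comp_id]
  change _ = LinearMap.rTensor C (dMulRight k A) _
  rw [dMulRight, LinearMap.rTensor_sub]
  rfl

end UniversalDGA
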